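/- (Duflo–Vergne) Let q be a finite-dimensional Lie algebra over a field k of characteristic 0 and let w ∈ q* be a regular linear form, i.e. dim q_w = ind q. Then the stabilizer q_w is an abelian Lie subalgebra of q. -/

import Mathlib

open Module

section Defs

variable (k : Type*) [Field k]

/-- The stabiliser `q_ξ = {x ∈ q | ξ ⁅x, y⁆ = 0 for all y}` of a linear form `ξ ∈ q*`. -/
def lieStab (q : Type*) [LieRing q] [LieAlgebra k q] (ξ : Module.Dual k q) :
    Submodule k q where
  carrier := {x : q | ∀ y : q, ξ ⁅x, y⁆ = 0}
  add_mem' := by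
    intro a b ha hb y
    rw [add_lie, map_add, ha y, hb y, add_zero]
  zero_mem' := by
    intro y
    rw [zero_lie, map_zero]
  smul_mem' := by
    intro c a ha y
    rw [smul_lie, map_smul, ha y, smul_zero]

/-- The index of a Lie algebra: the minimal dimension of the stabiliser of a linear form. -/
noncomputable def lieIndex (q : Type*) [LieRing q] [LieAlgebra k q] : ℕ :=
  ⨅ ξ : Module.Dual k q, Module.finrank k ↥(lieStab k q ξ)

end Defs

/-!
For `ξ ∈ q*` the Kirillov form `B_ξ(x, y) = ξ ⁅x, y⁆` is alternating with kernel `q_ξ`, and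
`B_w + t B_ξ = B_{w + t ξ}`. So regularity of `w` says that `B_w` has maximal rank in the pencil
`B_w + t B_ξ`. Fix a complement `W` of `q_w` with Gram matrices `M₀, M₁` of `B_w, B_ξ` on `W`;
`det M₀ ≠ 0`. Whenever `det (M₀ + t M₁) ≠ 0`, the form `B_w + t B_ξ` has the same rank as its
restriction to `W`, so it is recovered from its values on `q × W` and `W × q` through the
adjugate of `M₀ + t M₁`. For `x, y ∈ q_w` and `t ≠ 0` this reads
`B_ξ(x, y) det (M₀ + t M₁) = t P(t)` for a polynomial `P`; as `k` is infinite this is a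
polynomial identity, and `t = 0` gives `B_ξ(x, y) = 0`. Since `ξ` is arbitrary, `⁅x, y⁆ = 0`.
-/

open Polynomial Matrix

lemma Polynomial.eq_zero_of_mul_eval_eq_mul_eval {k : Type*} [Field k] [Infinite k]
    {d P : k[X]} {c : k} (hd : d.eval 0 ≠ 0)
    (h : ∀ t ≠ 0, d.eval t ≠ 0 → c * d.eval t = t * P.eval t) : c = 0 := by
  have hd0 : d ≠ 0 := by rintro rfl; simp at hd
  have hQ : C c * d - X * P = 0 := by
    refine eq_zero_of_infinite_isRoot _
      (((finite_setOfPred_isRoot hd0).union (Set.finite_singleton 0)).infinite_compl.mono ?_)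
    intro t ht
    simp only [Set.mem_compl_iff, Set.mem_union, Set.mem_ofPred_eq, IsRoot.def, not_or] at ht
    simp [h t ht.2 ht.1]
  simpa [hd] using congrArg (eval 0) hQ

namespace Matrix

variable {n k : Type*} [CommRing k] (M₀ M₁ : Matrix n n k) (t : k)

lemma map_eval_map_C_add_X_smul :
    (M₀.map C + (X : k[X]) • M₁.map C).map (eval t) = M₀ + t • M₁ := by
  ext i j
  simp only [map_apply, add_apply, smul_apply, smul_eq_mul, eval_add, eval_mul, eval_C, eval_X]

variable [Fintype n] [DecidableEq n]

lemma eval_det_map_C_add_X_smul :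
    (M₀.map C + (X : k[X]) • M₁.map C).det.eval t = (M₀ + t • M₁).det := by
  rw [← map_eval_map_C_add_X_smul M₀ M₁ t, ← coe_evalRingHom, RingHom.map_det]
  rfl

lemma eval_vecMul_adjugate_map_C_add_X_smul_dotProduct (u w : n → k) :
    ((C ∘ u) ᵥ* (M₀.map C + (X : k[X]) • M₁.map C).adjugate ⬝ᵥ (C ∘ w)).eval t =
      u ᵥ* (M₀ + t • M₁).adjugate ⬝ᵥ w := by
  have hadj : (evalRingHom t).mapMatrix (M₀.map C + (X : k[X]) • M₁.map C).adjugate =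
      (M₀ + t • M₁).adjugate := by
    rw [RingHom.map_adjugate, RingHom.mapMatrix_apply, coe_evalRingHom, map_eval_map_C_add_X_smul]
  rw [← coe_evalRingHom, RingHom.map_dotProduct, ← hadj]
  congr 1
  · ext j
    rw [Function.comp_apply, RingHom.map_vecMul]
    simp [Function.comp_def]
  · ext i
    simp

end Matrix

namespace LinearMap.BilinForm

variable {k V : Type*} [Field k] [AddCommGroup V] [Module k V] [FiniteDimensional k V]

lemma ker_eq_orthogonal_flip {D : LinearMap.BilinForm k V} {W : Submodule k V}
    (hW : (D.restrict W).Nondegenerate)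
    (hdim : finrank k V ≤ finrank k W + finrank k (ker D)) :
    ker D = D.flip.orthogonal W := by
  refine Submodule.eq_of_le_of_finrank_le (fun v hv u _ => by simp [LinearMap.mem_ker.mp hv]) ?_
  have hdisj : W ⊓ ker D.flip = ⊥ := by
    refine eq_bot_iff.mpr fun v ⟨hvW, hv⟩ => ?_
    have := hW.2 ⟨v, hvW⟩ fun u => by simpa using LinearMap.congr_fun (LinearMap.mem_ker.mp hv) u
    simpa using this
  have := finrank_add_finrank_orthogonal' (B := D.flip) W
  rw [hdisj, finrank_bot] at this
  omega

lemma IsRefl.nondegenerate_restrict_of_isCompl_ker {B : LinearMap.BilinForm k V} (hB : B.IsRefl)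
    {W : Submodule k V} (hW : IsCompl W (ker B)) : (B.restrict W).Nondegenerate := by
  rw [nondegenerate_iff_ker_eq_bot, ker_restrict_eq_of_codisjoint hW.codisjoint
    fun x _ y hy => hB _ _ (by simp [LinearMap.mem_ker.mp hy]),
    ← Submodule.disjoint_iff_comap_eq_bot]
  exact hW.disjoint

variable {ι : Type*} [Fintype ι] [DecidableEq ι]

lemma apply_mul_det_eq_vecMul_adjugate_dotProduct {D : LinearMap.BilinForm k V}
    {W : Submodule k V} (b : Basis ι k W) (hW : (D.restrict W).Nondegenerate)
    (hdim : finrank k V ≤ finrank k W + finrank k (ker D)) (v y : V) :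
    D v y * (toMatrix b (D.restrict W)).det =
      (fun j => D v (b j)) ᵥ* (toMatrix b (D.restrict W)).adjugate ⬝ᵥ fun i => D (b i) y := by
  set M := toMatrix b (D.restrict W)
  set c := (fun j => D v (b j)) ᵥ* M.adjugate
  set z : V := ∑ i, c i • (b i : V)
  have hz : ∀ u, D z u = c ⬝ᵥ fun i => D (b i) u := fun u => by
    simp [z, dotProduct]
  have hzb : ∀ j, D z (b j) = M.det * D v (b j) := fun j => by
    have : c ᵥ* M = M.det • fun j => D v (b j) := by
      rw [Matrix.vecMul_vecMul, Matrix.adjugate_mul, Matrix.vecMul_smul, Matrix.vecMul_one]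
    simpa [hz, M, Matrix.vecMul] using congrFun this j
  have hker : M.det • v - z ∈ ker D := by
    rw [ker_eq_orthogonal_flip hW hdim]
    suffices (D (M.det • v - z)).comp W.subtype = 0 from
      fun n hn => LinearMap.congr_fun this ⟨n, hn⟩
    refine b.ext fun j => ?_
    simp [hzb]
  have := LinearMap.congr_fun (LinearMap.mem_ker.mp hker) y
  simp only [map_sub, map_smul, LinearMap.sub_apply, LinearMap.smul_apply, smul_eq_mul, hz,
    LinearMap.zero_apply, sub_eq_zero] at this
  rw [mul_comm, this]

lemma IsRefl.apply_mul_det_add_smul_eq {B₀ B₁ : LinearMap.BilinForm k V} (hB₀ : B₀.IsRefl)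
    {W : Submodule k V} (b : Basis ι k W) {t : k} (ht : t ≠ 0)
    (hW : ((B₀ + t • B₁).restrict W).Nondegenerate)
    (hdim : finrank k V ≤ finrank k W + finrank k (ker (B₀ + t • B₁)))
    {x y : V} (hx : B₀ x = 0) (hy : B₀ y = 0) :
    B₁ x y * (toMatrix b ((B₀ + t • B₁).restrict W)).det =
      t * ((fun j => B₁ x (b j)) ᵥ* (toMatrix b ((B₀ + t • B₁).restrict W)).adjugate ⬝ᵥ
        fun i => B₁ (b i) y) := by
  have hy' : ∀ v, B₀ v y = 0 := fun v => hB₀ _ _ (by simp [hy])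
  have key := apply_mul_det_eq_vecMul_adjugate_dotProduct b hW hdim x y
  have hxb : (fun j => (B₀ + t • B₁) x (b j)) = t • fun j => B₁ x (b j) := by
    ext j; simp [hx]
  have hby : (fun i => (B₀ + t • B₁) (b i) y) = t • fun i => B₁ (b i) y := by
    ext i; simp [hy']
  rw [hxb, hby, Matrix.smul_vecMul, smul_dotProduct, dotProduct_smul] at key
  simp only [LinearMap.add_apply, LinearMap.smul_apply, hx, zero_add, smul_eq_mul] at key
  exact mul_left_cancel₀ ht (by linear_combination key)

theorem IsRefl.apply_eq_zero_of_forall_finrank_ker_le [Infinite k]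
    {B₀ B₁ : LinearMap.BilinForm k V} (hB₀ : B₀.IsRefl)
    (hmin : ∀ t : k, finrank k (ker B₀) ≤ finrank k (ker (B₀ + t • B₁)))
    {x y : V} (hx : B₀ x = 0) (hy : B₀ y = 0) : B₁ x y = 0 := by
  obtain ⟨W, hW⟩ := (ker B₀).exists_isCompl
  let b := Module.finBasis k W
  set M₀ := toMatrix b (B₀.restrict W)
  set M₁ := toMatrix b (B₁.restrict W)
  have hM (t : k) : toMatrix b ((B₀ + t • B₁).restrict W) = M₀ + t • M₁ := by
    rw [← map_smul, ← map_add]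
    rfl
  refine Polynomial.eq_zero_of_mul_eval_eq_mul_eval
    (d := (M₀.map C + (X : k[X]) • M₁.map C).det)
    (P := (C ∘ fun j => B₁ x (b j)) ᵥ* (M₀.map C + (X : k[X]) • M₁.map C).adjugate ⬝ᵥ
      (C ∘ fun i => B₁ (b i) y)) ?_ fun t ht hdt => ?_
  · rw [eval_det_map_C_add_X_smul, zero_smul, add_zero]
    exact (nondegenerate_iff_det_ne_zero b).mp (hB₀.nondegenerate_restrict_of_isCompl_ker hW.symm)
  · rw [eval_det_map_C_add_X_smul, ← hM] at hdt
    rw [eval_det_map_C_add_X_smul, eval_vecMul_adjugate_map_C_add_X_smul_dotProduct, ← hM]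
    have hdim : finrank k V ≤ finrank k W + finrank k (ker (B₀ + t • B₁)) := by
      have := Submodule.finrank_add_eq_of_isCompl hW
      have := hmin t
      omega
    exact hB₀.apply_mul_det_add_smul_eq b ht ((nondegenerate_iff_det_ne_zero b).mpr hdt) hdim
      hx hy

end LinearMap.BilinForm

section LieAlgebra

variable (k : Type*) {q : Type*} [Field k] [LieRing q] [LieAlgebra k q]

def kirillovForm (ξ : Module.Dual k q) : LinearMap.BilinForm k q :=
  (LieModule.toEnd k q q : q →ₗ[k] Module.End k q).compr₂ ξ

@[simp]
lemma kirillovForm_apply (ξ : Module.Dual k q) (x y : q) : kirillovForm k ξ x y = ξ ⁅x, y⁆ :=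
  rfl

lemma kirillovForm_isAlt (ξ : Module.Dual k q) : (kirillovForm k ξ).IsAlt := fun x => by simp

lemma kirillovForm_add_smul (ξ η : Module.Dual k q) (t : k) :
    kirillovForm k (ξ + t • η) = kirillovForm k ξ + t • kirillovForm k η := by
  ext
  simp

lemma ker_kirillovForm (ξ : Module.Dual k q) :
    LinearMap.ker (kirillovForm k ξ) = lieStab k q ξ := by
  ext x
  simp [LinearMap.ext_iff, lieStab]

lemma lieIndex_le_finrank_lieStab (ξ : Module.Dual k q) :
    lieIndex k q ≤ finrank k (lieStab k q ξ) :=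
  ciInf_le (OrderBot.bddBelow _) ξ

end LieAlgebra

/-- (Duflo–Vergne) If `w ∈ q*` is a regular linear form, i.e. `dim q_w = ind q`, then the
stabiliser `q_w` is an abelian Lie subalgebra of `q`. -/
theorem lieStab_abelian_of_regular
    (k : Type*) [Field k] [CharZero k]
    (q : Type*) [LieRing q] [LieAlgebra k q] [FiniteDimensional k q]
    (w : Module.Dual k q)
    (hreg : Module.finrank k ↥(lieStab k q w) = lieIndex k q) :
    ∀ x ∈ lieStab k q w, ∀ y ∈ lieStab k q w, ⁅x, y⁆ = 0 := by
  intro x hx y hy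
  have hmin (ξ : Module.Dual k q) (t : k) : finrank k (LinearMap.ker (kirillovForm k w)) ≤
      finrank k (LinearMap.ker (kirillovForm k w + t • kirillovForm k ξ)) := by
    rw [← kirillovForm_add_smul, ker_kirillovForm, ker_kirillovForm, hreg]
    exact lieIndex_le_finrank_lieStab k _
  rw [← ker_kirillovForm, LinearMap.mem_ker] at hx hy
  refine (Module.forall_dual_apply_eq_zero_iff k _).mp fun ξ => ?_
  exact (kirillovForm_isAlt k w).isRefl.apply_eq_zero_of_forall_finrank_ker_le (hmin ξ) hx hy
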